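/- Suppose q satisfies E[q(Z,A,X) | M=m, A=a, X=x, G=O] = p(M=m | A=a, X=x, G=E) / (p(M=m | A=a, X=x, G=O)·P(A=a | X=x, G=O)) for all m. Under internal validity M^(a) ⫫ A | (X, G=E) and external validity M^(a) ⫫ G | X and consistency, this equals 1 / P(A=a | M^(a)=m, X=x, G=O). -/

import Mathlib

open MeasureTheory

/-- Conditional expectation of `W` given the event `s`. -/
noncomputable def cexp {Ω : Type*} [MeasurableSpace Ω] (μ : Measure Ω)
    (W : Ω → ℝ) (s : Set Ω) : ℝ :=
  (∫ ω in s, W ω ∂μ) / (μ s).toReal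

/-- Conditional probability of `s` given the event `t`. -/
noncomputable def cpr {Ω : Type*} [MeasurableSpace Ω] (μ : Measure Ω)
    (s t : Set Ω) : ℝ :=
  (μ (s ∩ t)).toReal / (μ t).toReal

/-- Conditional independence of the random variable `W` and the event `s`,
given the event `C`. -/
def CIset {Ω : Type*} [MeasurableSpace Ω] (μ : Measure Ω) {β : Type*} [MeasurableSpace β]
    (W : Ω → β) (s C : Set Ω) : Prop :=
  ∀ S : Set β, MeasurableSet S →
    (μ (W ⁻¹' S ∩ s ∩ C)).toReal * (μ C).toReal
      = (μ (W ⁻¹' S ∩ C)).toReal * (μ (s ∩ C)).toReal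

/-- Conditional independence of the random variables `W1` and `W2`
given the event `C`. -/
def CIfun2 {Ω : Type*} [MeasurableSpace Ω] (μ : Measure Ω)
    {β1 β2 : Type*} [MeasurableSpace β1] [MeasurableSpace β2]
    (W1 : Ω → β1) (W2 : Ω → β2) (C : Set Ω) : Prop :=
  ∀ (S1 : Set β1) (S2 : Set β2), MeasurableSet S1 → MeasurableSet S2 →
    (μ (W1 ⁻¹' S1 ∩ W2 ⁻¹' S2 ∩ C)).toReal * (μ C).toReal
      = (μ (W1 ⁻¹' S1 ∩ C)).toReal * (μ (W2 ⁻¹' S2 ∩ C)).toReal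

/-- Domain indicator: observational (`O`) or experimental (`E`). -/
inductive Dom : Type
  | O
  | E
deriving DecidableEq

/-- Conditional CDF of `W` given the event `C`. -/
noncomputable def ccdf {Ω : Type*} [MeasurableSpace Ω] (μ : Measure Ω)
    (W : Ω → ℝ) (C : Set Ω) (w : ℝ) : ℝ :=
  (μ ({ω | W ω ≤ w} ∩ C)).toReal / (μ C).toReal


/-! Internal validity lets us drop the conditioning on `A = a` inside the experimental domain, and
external validity moves the law of `M^(a)` given `X = x` from the experimental to the observational
domain. Hence `p(M = m | A = a, X = x, E) = p(M^(a) = m | X = x, O)` by consistency, and Bayes' rule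
in the observational domain turns the ratio into `1 / P(A = a | M^(a) = m, X = x, O)`. -/

section

variable {Ω : Type*} [MeasurableSpace Ω] {μ : Measure Ω}

lemma cpr_congr_left_of_inter_eq {s s' t : Set Ω} (h : s ∩ t = s' ∩ t) (u : Set Ω) :
    cpr μ s (t ∩ u) = cpr μ s' (t ∩ u) := by
  unfold cpr
  rw [← Set.inter_assoc, h, Set.inter_assoc]

variable [IsFiniteMeasure μ]

lemma cpr_ne_zero {s t : Set Ω} (h : μ (s ∩ t) ≠ 0) : cpr μ s t ≠ 0 :=
  div_ne_zero ((measureReal_ne_zero_iff).2 h)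
    ((measureReal_ne_zero_iff).2 fun h0 => h (measure_mono_null Set.inter_subset_right h0))

lemma cpr_mul_cpr (s t u : Set Ω) :
    cpr μ s (t ∩ u) * cpr μ t u = μ.real (s ∩ t ∩ u) / μ.real u := by
  simp only [cpr, ← measureReal_def, ← Set.inter_assoc]
  by_cases htu : μ.real (t ∩ u) = 0
  · have hstu : μ.real (s ∩ t ∩ u) = 0 :=
      measureReal_mono_null (by rw [Set.inter_assoc]; exact Set.inter_subset_right) htu
    simp [htu, hstu]
  · field_simp

lemma cpr_mul_cpr_comm (s t u : Set Ω) :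
    cpr μ s (t ∩ u) * cpr μ t u = cpr μ t (s ∩ u) * cpr μ s u := by
  rw [cpr_mul_cpr, cpr_mul_cpr, Set.inter_comm t s]

lemma CIset.cpr_inter_eq {β : Type*} [MeasurableSpace β] {W : Ω → β} {s C : Set Ω}
    (h : CIset μ W s C) {S : Set β} (hS : MeasurableSet S) (hsC : μ (s ∩ C) ≠ 0) :
    cpr μ (W ⁻¹' S) (s ∩ C) = cpr μ (W ⁻¹' S) C := by
  have hC : μ C ≠ 0 := fun h0 => hsC (measure_mono_null Set.inter_subset_right h0)
  simp only [cpr, ← measureReal_def]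
  rw [div_eq_div_iff ((measureReal_ne_zero_iff).2 hsC) ((measureReal_ne_zero_iff).2 hC),
    ← Set.inter_assoc]
  exact h S hS

lemma cpr_transport_of_CIset {β : Type*} [MeasurableSpace β] {W : Ω → β} {s C E O : Set Ω}
    (hInternal : CIset μ W s (C ∩ E)) (hExternalE : CIset μ W E C)
    (hExternalO : CIset μ W O C) {S : Set β} (hS : MeasurableSet S)
    (hsCE : μ (s ∩ (C ∩ E)) ≠ 0) (hCO : μ (C ∩ O) ≠ 0) :
    cpr μ (W ⁻¹' S) (s ∩ (C ∩ E)) = cpr μ (W ⁻¹' S) (C ∩ O) := by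
  have hCE : μ (E ∩ C) ≠ 0 := by
    rw [Set.inter_comm]
    exact fun h0 => hsCE (measure_mono_null Set.inter_subset_right h0)
  rw [hInternal.cpr_inter_eq hS hsCE, Set.inter_comm C E, hExternalE.cpr_inter_eq hS hCE,
    ← hExternalO.cpr_inter_eq hS (by rwa [Set.inter_comm]), Set.inter_comm O C]

end

theorem stmt14_general {Ω 𝓧 : Type*} [MeasurableSpace Ω]
    (μ : Measure Ω) [IsProbabilityMeasure μ]
    (A M M0 M1 : Ω → ℝ) (X : Ω → 𝓧) (G : Ω → Dom)
    (hcons : ∀ ω, M ω = A ω * M1 ω + (1 - A ω) * M0 ω)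
    -- internal validity: M^(a) ⫫ A | (X, G = E)
    (hInternal : ∀ a : ℝ, a = 0 ∨ a = 1 → ∀ (x : 𝓧) (a' : ℝ),
      CIset μ (fun ω => a * M1 ω + (1 - a) * M0 ω) {ω | A ω = a'}
        ({ω | X ω = x} ∩ {ω | G ω = Dom.E}))
    -- external validity: M^(a) ⫫ G | X
    (hExternal : ∀ a : ℝ, a = 0 ∨ a = 1 → ∀ (x : 𝓧) (g : Dom),
      CIset μ (fun ω => a * M1 ω + (1 - a) * M0 ω) {ω | G ω = g} {ω | X ω = x}) :
    ∀ a : ℝ, a = 0 ∨ a = 1 → ∀ (m : ℝ) (x : 𝓧),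
      μ ({ω | M ω = m} ∩ {ω | A ω = a} ∩ {ω | X ω = x} ∩ {ω | G ω = Dom.O}) ≠ 0 →
      μ ({ω | A ω = a} ∩ {ω | X ω = x} ∩ {ω | G ω = Dom.E}) ≠ 0 →
      μ ({ω | A ω = a} ∩ {ω | X ω = x} ∩ {ω | G ω = Dom.O}) ≠ 0 →
      μ ({ω | X ω = x} ∩ {ω | G ω = Dom.O}) ≠ 0 →
      μ ({ω | a * M1 ω + (1 - a) * M0 ω = m} ∩ {ω | X ω = x} ∩ {ω | G ω = Dom.O}) ≠ 0 →
      cpr μ {ω | M ω = m} ({ω | A ω = a} ∩ {ω | X ω = x} ∩ {ω | G ω = Dom.E})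
          / (cpr μ {ω | M ω = m} ({ω | A ω = a} ∩ {ω | X ω = x} ∩ {ω | G ω = Dom.O})
            * cpr μ {ω | A ω = a} ({ω | X ω = x} ∩ {ω | G ω = Dom.O}))
        = 1 / cpr μ {ω | A ω = a}
            ({ω | a * M1 ω + (1 - a) * M0 ω = m} ∩ {ω | X ω = x} ∩ {ω | G ω = Dom.O}) := by
  intro a ha m x _ hAXE _ hXO hMXO
  set Ma := fun ω => a * M1 ω + (1 - a) * M0 ω
  have hconsistency : {ω | M ω = m} ∩ {ω | A ω = a} = Ma ⁻¹' {m} ∩ {ω | A ω = a} := by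
    ext ω
    simp only [Set.mem_inter_iff, Set.mem_ofPred_eq, Set.mem_preimage, Set.mem_singleton_iff]
    exact and_congr_left fun hA => by rw [hcons ω, hA]
  have htransport : cpr μ (Ma ⁻¹' {m}) ({ω | A ω = a} ∩ ({ω | X ω = x} ∩ {ω | G ω = Dom.E}))
      = cpr μ (Ma ⁻¹' {m}) ({ω | X ω = x} ∩ {ω | G ω = Dom.O}) :=
    cpr_transport_of_CIset (hInternal a ha x a) (hExternal a ha x _) (hExternal a ha x _)
      (measurableSet_singleton m) (by rwa [← Set.inter_assoc]) hXO
  have hMa : cpr μ (Ma ⁻¹' {m}) ({ω | X ω = x} ∩ {ω | G ω = Dom.O}) ≠ 0 :=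
    cpr_ne_zero (by rwa [← Set.inter_assoc])
  simp only [Set.inter_assoc]
  rw [cpr_congr_left_of_inter_eq hconsistency, cpr_congr_left_of_inter_eq hconsistency,
    htransport, cpr_mul_cpr_comm, div_mul_cancel_right₀ hMa, one_div]
  rfl

theorem stmt14 {Ω 𝓩 𝓧 : Type*} [MeasurableSpace Ω]
    (μ : Measure Ω) [IsProbabilityMeasure μ]
    (A M M0 M1 : Ω → ℝ) (Z : Ω → 𝓩) (X : Ω → 𝓧) (G : Ω → Dom)
    (q : 𝓩 → ℝ → 𝓧 → ℝ)
    (hAbin : ∀ ω, A ω = 0 ∨ A ω = 1)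
    (hcons : ∀ ω, M ω = A ω * M1 ω + (1 - A ω) * M0 ω)
    -- q solves the conditional moment equation
    (hq : ∀ (m : ℝ) (a : ℝ) (x : 𝓧),
      μ ({ω | M ω = m} ∩ {ω | A ω = a} ∩ {ω | X ω = x} ∩ {ω | G ω = Dom.O}) ≠ 0 →
      cexp μ (fun ω => q (Z ω) (A ω) (X ω))
          ({ω | M ω = m} ∩ {ω | A ω = a} ∩ {ω | X ω = x} ∩ {ω | G ω = Dom.O})
        = cpr μ {ω | M ω = m} ({ω | A ω = a} ∩ {ω | X ω = x} ∩ {ω | G ω = Dom.E})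
          / (cpr μ {ω | M ω = m} ({ω | A ω = a} ∩ {ω | X ω = x} ∩ {ω | G ω = Dom.O})
            * cpr μ {ω | A ω = a} ({ω | X ω = x} ∩ {ω | G ω = Dom.O})))
    -- internal validity: M^(a) ⫫ A | (X, G = E)
    (hInternal : ∀ a : ℝ, a = 0 ∨ a = 1 → ∀ (x : 𝓧) (a' : ℝ),
      CIset μ (fun ω => a * M1 ω + (1 - a) * M0 ω) {ω | A ω = a'}
        ({ω | X ω = x} ∩ {ω | G ω = Dom.E}))
    -- external validity: M^(a) ⫫ G | X
    (hExternal : ∀ a : ℝ, a = 0 ∨ a = 1 → ∀ (x : 𝓧) (g : Dom),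
      CIset μ (fun ω => a * M1 ω + (1 - a) * M0 ω) {ω | G ω = g} {ω | X ω = x}) :
    ∀ a : ℝ, a = 0 ∨ a = 1 → ∀ (m : ℝ) (x : 𝓧),
      μ ({ω | M ω = m} ∩ {ω | A ω = a} ∩ {ω | X ω = x} ∩ {ω | G ω = Dom.O}) ≠ 0 →
      μ ({ω | A ω = a} ∩ {ω | X ω = x} ∩ {ω | G ω = Dom.E}) ≠ 0 →
      μ ({ω | A ω = a} ∩ {ω | X ω = x} ∩ {ω | G ω = Dom.O}) ≠ 0 →
      μ ({ω | X ω = x} ∩ {ω | G ω = Dom.O}) ≠ 0 →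
      μ ({ω | a * M1 ω + (1 - a) * M0 ω = m} ∩ {ω | X ω = x} ∩ {ω | G ω = Dom.O}) ≠ 0 →
      cpr μ {ω | M ω = m} ({ω | A ω = a} ∩ {ω | X ω = x} ∩ {ω | G ω = Dom.E})
          / (cpr μ {ω | M ω = m} ({ω | A ω = a} ∩ {ω | X ω = x} ∩ {ω | G ω = Dom.O})
            * cpr μ {ω | A ω = a} ({ω | X ω = x} ∩ {ω | G ω = Dom.O}))
        = 1 / cpr μ {ω | A ω = a}
            ({ω | a * M1 ω + (1 - a) * M0 ω = m} ∩ {ω | X ω = x} ∩ {ω | G ω = Dom.O}) :=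
  stmt14_general μ A M M0 M1 X G hcons hInternal hExternal
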